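/- Let 1 ≤ k ≤ d be integers and u ∈ ℝ^d. Then for every a ∈ ℝ^d, (∑_{i=1}^k (|u|↓_i)²)^{1/2} ≤ ‖a‖₂ + √k · ‖u − a‖_∞. Consequently the ℓ2 norm of the k largest-magnitude entries of u is a lower bound for the dual elastic-net norm inf_a {‖a‖₂ + √k‖u − a‖_∞}. -/

import Mathlib

/-!
Let `T` be the set of indices of the `k` largest entries of `u`, so that the left-hand side is
the norm of the restriction `u|_T`. Writing `u|_T = a|_T + (u - a)|_T`, the triangle inequality
gives `‖u|_T‖₂ ≤ ‖a‖₂ + ‖(u - a)|_T‖₂`, and a vector with at most `k` entries, each bounded by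
`‖u - a‖_∞`, has Euclidean norm at most `√k ‖u - a‖_∞`.
-/

/-- The nonincreasing rearrangement of the absolute values of `u`,
0-indexed: `absDown u i` is the `(i+1)`-th largest of `|u 0|, …, |u (d-1)|`. -/
noncomputable def absDown {d : ℕ} (u : Fin d → ℝ) (i : Fin d) : ℝ :=
  |u (Tuple.sort (fun j => |u j|) i.rev)|

/-- 1-indexed access to the nonincreasing rearrangement: `zD u i = |u|↓_i` for `1 ≤ i ≤ d`. -/
noncomputable def zD {d : ℕ} (u : Fin d → ℝ) (i : ℕ) : ℝ :=
  if h : 1 ≤ i ∧ i ≤ d then absDown u ⟨i - 1, by omega⟩ else 0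

/-- The unit ball of the k-support norm: the convex hull of
`S_k = {w : ‖w‖₀ ≤ k, ‖w‖₂ ≤ 1}`. -/
noncomputable def kSupBall (d k : ℕ) : Set (EuclideanSpace ℝ (Fin d)) :=
  convexHull ℝ {w | (Finset.univ.filter fun i => w i ≠ 0).card ≤ k ∧ ‖w‖ ≤ 1}

/-- The k-support norm, defined as the gauge of `kSupBall d k`. -/
noncomputable def kSupNorm (d k : ℕ) (w : EuclideanSpace ℝ (Fin d)) : ℝ :=
  gauge (kSupBall d k) w

/-- The elastic-net norm `max{‖w‖₂, ‖w‖₁ / √k}`. -/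
noncomputable def elNet (d k : ℕ) (w : EuclideanSpace ℝ (Fin d)) : ℝ :=
  max ‖w‖ ((∑ i, |w i|) / Real.sqrt k)

open Finset

section Restriction

variable {ι : Type*}

noncomputable def restrictTo (T : Finset ι) (x : EuclideanSpace ℝ ι) : EuclideanSpace ℝ T :=
  WithLp.toLp 2 fun j => x j

theorem norm_restrictTo (T : Finset ι) (x : EuclideanSpace ℝ ι) :
    ‖restrictTo T x‖ = √(∑ j ∈ T, x j ^ 2) := by
  simp only [EuclideanSpace.norm_eq, restrictTo, Real.norm_eq_abs, sq_abs]
  rw [sum_coe_sort T fun j => x j ^ 2]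

variable [Fintype ι]

theorem norm_restrictTo_le (T : Finset ι) (x : EuclideanSpace ℝ ι) : ‖restrictTo T x‖ ≤ ‖x‖ := by
  rw [norm_restrictTo, EuclideanSpace.norm_eq]
  simp only [Real.norm_eq_abs, sq_abs]
  exact Real.sqrt_le_sqrt (sum_le_univ_sum_of_nonneg fun i => sq_nonneg (x i))

theorem norm_restrictTo_le_sqrt_card_mul_iSup (T : Finset ι) (x : EuclideanSpace ℝ ι) :
    ‖restrictTo T x‖ ≤ √(#T : ℝ) * ⨆ i, |x i| := by
  calc ‖restrictTo T x‖
      ≤ √(Fintype.card T) * ⨆ j : T, ‖inner ℝ (EuclideanSpace.basisFun T ℝ j) (restrictTo T x)‖ :=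
        (EuclideanSpace.basisFun T ℝ).norm_le_card_mul_iSup_norm_inner _
    _ ≤ √(#T : ℝ) * ⨆ i, |x i| := by
        simp only [EuclideanSpace.basisFun_inner, Fintype.card_coe, Real.norm_eq_abs]
        gcongr
        exact Real.iSup_le (fun j => le_ciSup (f := fun i => |x i|) (Set.finite_range _).bddAbove j)
          (Real.iSup_nonneg fun i => abs_nonneg (x i))

theorem sqrt_sum_sq_le_norm_add_sqrt_mul_iSup {k : ℕ} (T : Finset ι) (hT : #T ≤ k)
    (u a : EuclideanSpace ℝ ι) :
    √(∑ j ∈ T, u j ^ 2) ≤ ‖a‖ + √k * ⨆ i, |u i - a i| := by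
  calc √(∑ j ∈ T, u j ^ 2) = ‖restrictTo T a + restrictTo T (u - a)‖ := by
        rw [← norm_restrictTo]; congr 1; ext j; simp [restrictTo]
    _ ≤ ‖a‖ + √(#T : ℝ) * ⨆ i, |(u - a) i| :=
        norm_add_le_of_le (norm_restrictTo_le T a) (norm_restrictTo_le_sqrt_card_mul_iSup T _)
    _ ≤ ‖a‖ + √k * ⨆ i, |u i - a i| := by
        simp only [PiLp.sub_apply]
        gcongr
        exact Real.iSup_nonneg fun i => abs_nonneg _

end Restriction

section Rearrangement

variable {d : ℕ}

theorem zD_succ (u : Fin d → ℝ) (i : Fin d) : zD u (i + 1) = absDown u i := by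
  rw [zD, dif_pos ⟨by omega, i.isLt⟩]
  rfl

theorem zD_of_lt {u : Fin d → ℝ} {n : ℕ} (h : d < n) : zD u n = 0 := by
  rw [zD, dif_neg (by omega)]

theorem sum_Icc_zD_sq (u : Fin d → ℝ) (k : ℕ) :
    ∑ n ∈ Icc 1 k, zD u n ^ 2 = ∑ i with i.val < k, absDown u i ^ 2 := by
  have hinj : Set.InjOn (fun i : Fin d => i.val + 1) ↑(univ.filter fun i : Fin d => i.val < k) :=
    fun i _ j _ h => Fin.ext (by simpa using h)
  simp_rw [← zD_succ, ← sum_image (f := fun n => zD u n ^ 2) hinj]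
  symm
  refine sum_subset (fun n hn => ?_) fun n hn hn' => ?_
  · obtain ⟨i, hi, rfl⟩ := mem_image.1 hn
    simp only [mem_filter, mem_Icc] at hi ⊢
    omega
  · suffices d < n by simp [zD_of_lt this]
    by_contra! hnd
    simp only [mem_Icc] at hn
    exact hn' (mem_image.2 ⟨⟨n - 1, by omega⟩, by simp only [mem_filter, mem_univ, true_and]; omega,
      by simp only; omega⟩)

theorem exists_card_le_sum_Icc_zD_sq_eq (u : Fin d → ℝ) (k : ℕ) :
    ∃ T : Finset (Fin d), #T ≤ k ∧ ∑ n ∈ Icc 1 k, zD u n ^ 2 = ∑ j ∈ T, u j ^ 2 := by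
  set σ := Tuple.sort fun j => |u j|
  set S : Finset (Fin d) := univ.filter fun i => i.val < k
  have hinj : Set.InjOn (fun i : Fin d => σ i.rev) S :=
    fun i _ j _ h => Fin.rev_injective (σ.injective h)
  refine ⟨S.image fun i : Fin d => σ i.rev, ?_, ?_⟩
  · calc #(S.image fun i : Fin d => σ i.rev) ≤ #S := card_image_le
      _ ≤ #(range k) :=
          card_le_card_of_injOn Fin.val (fun i hi => by simpa [S] using hi) Fin.val_injective.injOn
      _ = k := card_range k
  · rw [sum_Icc_zD_sq, sum_image hinj]
    simp only [absDown, sq_abs, σ, S]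

end Rearrangement

theorem statement5_general (d k : ℕ) (u : EuclideanSpace ℝ (Fin d)) :
    (∀ a : EuclideanSpace ℝ (Fin d),
      Real.sqrt (∑ i ∈ Finset.Icc 1 k, zD u i ^ 2)
        ≤ ‖a‖ + Real.sqrt k * ⨆ i, |u i - a i|) ∧
    Real.sqrt (∑ i ∈ Finset.Icc 1 k, zD u i ^ 2)
      ≤ sInf {x : ℝ | ∃ a : EuclideanSpace ℝ (Fin d),
          x = ‖a‖ + Real.sqrt k * ⨆ i, |u i - a i|} := by
  obtain ⟨T, hT, hsum⟩ := exists_card_le_sum_Icc_zD_sq_eq u k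
  have bound (a : EuclideanSpace ℝ (Fin d)) :
      √(∑ n ∈ Icc 1 k, zD u n ^ 2) ≤ ‖a‖ + √k * ⨆ i, |u i - a i| :=
    hsum ▸ sqrt_sum_sq_le_norm_add_sqrt_mul_iSup T hT u a
  refine ⟨bound, le_csInf ⟨_, 0, rfl⟩ ?_⟩
  rintro x ⟨a, rfl⟩
  exact bound a

/-- for every `a`, `(∑_{i=1}^k (|u|↓ᵢ)²)^½ ≤ ‖a‖₂ + √k·‖u − a‖_∞`;
consequently the ℓ2 norm of the `k` largest-magnitude entries of `u` is a lower
bound for `inf_a {‖a‖₂ + √k‖u − a‖_∞}`. -/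
theorem statement5 (d k : ℕ) (hk1 : 1 ≤ k) (hkd : k ≤ d) (u : EuclideanSpace ℝ (Fin d)) :
    (∀ a : EuclideanSpace ℝ (Fin d),
      Real.sqrt (∑ i ∈ Finset.Icc 1 k, zD u i ^ 2)
        ≤ ‖a‖ + Real.sqrt k * ⨆ i, |u i - a i|) ∧
    Real.sqrt (∑ i ∈ Finset.Icc 1 k, zD u i ^ 2)
      ≤ sInf {x : ℝ | ∃ a : EuclideanSpace ℝ (Fin d),
          x = ‖a‖ + Real.sqrt k * ⨆ i, |u i - a i|} :=
  statement5_general d k u
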